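/- arXiv:2501.11534 — 2 statements merged into one kernel-verified Lean document; each statement's English description precedes it below -/
import Mathlib

section
/- Let K be a field of characteristic 0, let ∂ be formal differentiation on K[x], let J be the K-linear integration operator with J(xⁿ) = xⁿ⁺¹/(n+1), and let a ⋄ b = ∂(a)·J(b). Then the standard skew-symmetric polynomial of degree 4 with fixed first argument vanishes: Σ_{σ ∈ S₄, σ(1)=1} sign(σ)·(((t_{σ(1)} ⋄ t_{σ(2)}) ⋄ t_{σ(3)}) ⋄ t_{σ(4)}) = 0 for all t₁, t₂, t₃, t₄ ∈ K[x]; explicitly, the alternating sum over the six permutations (b,c,d), (b,d,c), (c,b,d), (c,d,b), (d,b,c), (d,c,b) of ((a ⋄ ·) ⋄ ·) ⋄ · with signs +,−,−,+,+,− vanishes. -/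
open Polynomial

/-- The product `a ⋄ b = ∂a * J b`. -/
noncomputable def diam {K : Type*} [Field K]
    (J : Polynomial K →ₗ[K] Polynomial K) (a b : Polynomial K) : Polynomial K :=
  derivative a * J b

lemma deriv_J {K : Type*} [Field K] [CharZero K]
    (J : Polynomial K →ₗ[K] Polynomial K)
    (hJ : ∀ m : ℕ, J (X ^ m) = (((m : K) + 1)⁻¹) • X ^ (m + 1)) :
    ∀ p : Polynomial K, derivative (J p) = p := by
  intro p
  induction p using Polynomial.induction_on' with
  | add p q hp hq => simp [map_add, hp, hq]
  | monomial n a =>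
    have hn : ((n : K) + 1) ≠ 0 := Nat.cast_add_one_ne_zero n
    rw [Polynomial.smul_X_eq_monomial.symm, map_smul, hJ, map_smul, map_smul,
      derivative_X_pow]
    simp only [Nat.add_sub_cancel, Nat.cast_add, Nat.cast_one]
    rw [smul_smul, Polynomial.smul_eq_C_mul, Polynomial.smul_eq_C_mul,
      ← mul_assoc, ← C_mul, mul_assoc, inv_mul_cancel₀ hn, mul_one]

/-- For the integration operator `J` on `K[x]` (char `K` = 0) and the
product `a ⋄ b = ∂a * J b`, the standard skew-symmetric polynomial of degree 4 with
fixed first argument vanishes: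
`Σ_{σ ∈ S₄, σ(1)=1} sign σ · (((t₁ ⋄ t_{σ(2)}) ⋄ t_{σ(3)}) ⋄ t_{σ(4)}) = 0`. -/
theorem stmt_15 (K : Type*) [Field K] [CharZero K]
    (J : Polynomial K →ₗ[K] Polynomial K)
    (hJ : ∀ m : ℕ, J (X ^ m) = (((m : K) + 1)⁻¹) • X ^ (m + 1)) :
    ∀ a b c d : Polynomial K,
      diam J (diam J (diam J a b) c) d
        - diam J (diam J (diam J a b) d) c
        - diam J (diam J (diam J a c) b) d
        + diam J (diam J (diam J a c) d) b
        + diam J (diam J (diam J a d) b) c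
        - diam J (diam J (diam J a d) c) b = 0 := by
  intro a b c d
  simp only [diam, derivative_mul, deriv_J J hJ]
  ring
end

section
/- Let K be a field of characteristic 0, let ∂ be formal differentiation on K[x], let J be the K-linear integration operator with J(xⁿ) = xⁿ⁺¹/(n+1), let a ⋄ b = ∂(a)·J(b), and let [x, y] = x ⋄ y − y ⋄ x. Then for all a, b, c, d, e ∈ K[x]: (a ⋄ (b ⋄ c)) ⋄ [d, e] − b ⋄ ((a ⋄ [d, e]) ⋄ c) + b ⋄ (d ⋄ [c, a ⋄ e]) + b ⋄ ((a ⋄ e) ⋄ [c, d]) + b ⋄ ([d, a ⋄ e] ⋄ c) − b ⋄ ((a ⋄ d) ⋄ [c, e]) − b ⋄ (e ⋄ [c, a ⋄ d]) − b ⋄ ([e, a ⋄ d] ⋄ c) + d ⋄ [a ⋄ e, b ⋄ c] − e ⋄ [a ⋄ d, b ⋄ c] + (a ⋄ [e, b ⋄ c]) ⋄ d − (a ⋄ [d, b ⋄ c]) ⋄ e = 0. -/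
open Polynomial

/-- The commutator `[a, b] = a ⋄ b − b ⋄ a` of the product `⋄`. -/
noncomputable def dbrk {K : Type*} [Field K]
    (J : Polynomial K →ₗ[K] Polynomial K) (a b : Polynomial K) : Polynomial K :=
  diam J a b - diam J b a

section Aux

variable {K : Type*} [Field K] [CharZero K]
  (J : Polynomial K →ₗ[K] Polynomial K)
  (hJ : ∀ m : ℕ, J (X ^ m) = (((m : K) + 1)⁻¹) • X ^ (m + 1))

include hJ in
theorem deriv_J_aux : ∀ p : Polynomial K, derivative (J p) = p := by
  intro p
  induction p using Polynomial.induction_on' with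
  | add p q hp hq => rw [map_add, map_add, hp, hq]
  | monomial n t =>
      rw [← smul_X_eq_monomial, map_smul, map_smul, hJ, derivative_smul,
        derivative_X_pow]
      push_cast
      have h0 : ((n:K)+1)⁻¹ • (C ((n:K)+1) * X ^ n : K[X]) = X ^ n := by
        rw [smul_eq_C_mul, ← mul_assoc, ← C_mul,
          inv_mul_cancel₀ (Nat.cast_add_one_ne_zero n : ((n:K)+1) ≠ 0), C_1, one_mul]
      rw [h0]

include hJ in
theorem coeff_J_aux : ∀ p : Polynomial K, (J p).coeff 0 = 0 := by
  intro p
  induction p using Polynomial.induction_on' with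
  | add p q hp hq => rw [map_add, coeff_add, hp, hq, add_zero]
  | monomial n t =>
      rw [← smul_X_eq_monomial, map_smul, hJ, smul_smul, coeff_smul, coeff_X_pow]
      simp

include hJ in
theorem key_aux : ∀ p q : Polynomial K, derivative q = p → q.coeff 0 = 0 → J p = q := by
  intro p q h1 h2
  have hd : derivative (J p - q) = 0 := by
    rw [derivative_sub, deriv_J_aux J hJ, h1, sub_self]
  have hc := eq_C_of_derivative_eq_zero hd
  rw [coeff_sub, coeff_J_aux J hJ, h2, sub_zero, map_zero] at hc
  exact sub_eq_zero.mp hc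

end Aux

/-- For the integration operator `J` on `K[x]` (char `K` = 0), the product
`a ⋄ b = ∂a * J b` and the commutator `[x, y] = x ⋄ y − y ⋄ x` satisfy the displayed
identity of degree 5. -/
theorem stmt_17 (K : Type*) [Field K] [CharZero K]
    (J : Polynomial K →ₗ[K] Polynomial K)
    (hJ : ∀ m : ℕ, J (X ^ m) = (((m : K) + 1)⁻¹) • X ^ (m + 1)) :
    ∀ a b c d e : Polynomial K,
      diam J (diam J a (diam J b c)) (dbrk J d e)
        - diam J b (diam J (diam J a (dbrk J d e)) c)
        + diam J b (diam J d (dbrk J c (diam J a e)))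
        + diam J b (diam J (diam J a e) (dbrk J c d))
        + diam J b (diam J (dbrk J d (diam J a e)) c)
        - diam J b (diam J (diam J a d) (dbrk J c e))
        - diam J b (diam J e (dbrk J c (diam J a d)))
        - diam J b (diam J (dbrk J e (diam J a d)) c)
        + diam J d (dbrk J (diam J a e) (diam J b c))
        - diam J e (dbrk J (diam J a d) (diam J b c))
        + diam J (diam J a (dbrk J e (diam J b c))) d
        - diam J (diam J a (dbrk J d (diam J b c))) e = 0 := by
  have dJ := deriv_J_aux J hJ
  have cJ := coeff_J_aux J hJ
  have key := key_aux J hJ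
  intro a b c d e
  simp only [dbrk, diam]
  have h1 : J (derivative d * J e - derivative e * J d) = d * J e - e * J d := by
    apply key
    · simp only [derivative_mul, derivative_sub, derivative_add, dJ]; ring
    · simp [mul_coeff_zero, coeff_sub, cJ]
  have h1cd : J (derivative c * J d - derivative d * J c) = c * J d - d * J c := by
    apply key
    · simp only [derivative_mul, derivative_sub, derivative_add, dJ]; ring
    · simp [mul_coeff_zero, coeff_sub, cJ]
  have h1ce : J (derivative c * J e - derivative e * J c) = c * J e - e * J c := by
    apply key
    · simp only [derivative_mul, derivative_sub, derivative_add, dJ]; ring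
    · simp [mul_coeff_zero, coeff_sub, cJ]
  have h2 : J (derivative b * J c) = b * J c - J (b * c) := by
    apply key
    · simp only [derivative_mul, derivative_sub, derivative_add, dJ]; ring
    · simp [mul_coeff_zero, coeff_sub, cJ]
  have h3 : J (derivative a * J e) = a * J e - J (a * e) := by
    apply key
    · simp only [derivative_mul, derivative_sub, derivative_add, dJ]; ring
    · simp [mul_coeff_zero, coeff_sub, cJ]
  have h4 : J (derivative a * J d) = a * J d - J (a * d) := by
    apply key
    · simp only [derivative_mul, derivative_sub, derivative_add, dJ]; ring
    · simp [mul_coeff_zero, coeff_sub, cJ]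
  rw [h2, h3, h4, h1, h1cd, h1ce]
  have h5 : J (derivative c * (a * J e - J (a * e)) - derivative (derivative a * J e) * J c)
      = c * (a * J e - J (a * e)) - derivative a * J e * J c := by
    apply key
    · simp only [derivative_mul, derivative_sub, derivative_add, dJ]; ring
    · simp [mul_coeff_zero, coeff_sub, cJ]
  have h6 : J (derivative c * (a * J d - J (a * d)) - derivative (derivative a * J d) * J c)
      = c * (a * J d - J (a * d)) - derivative a * J d * J c := by
    apply key
    · simp only [derivative_mul, derivative_sub, derivative_add, dJ]; ring
    · simp [mul_coeff_zero, coeff_sub, cJ]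
  have h7 : J (derivative e * (b * J c - J (b * c)) - derivative (derivative b * J c) * J e)
      = e * (b * J c - J (b * c)) - derivative b * J c * J e := by
    apply key
    · simp only [derivative_mul, derivative_sub, derivative_add, dJ]; ring
    · simp [mul_coeff_zero, coeff_sub, cJ]
  have h8 : J (derivative d * (b * J c - J (b * c)) - derivative (derivative b * J c) * J d)
      = d * (b * J c - J (b * c)) - derivative b * J c * J d := by
    apply key
    · simp only [derivative_mul, derivative_sub, derivative_add, dJ]; ring
    · simp [mul_coeff_zero, coeff_sub, cJ]
  have h9 : J (derivative (derivative a * J e) * (b * J c - J (b * c))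
        - derivative (derivative b * J c) * (a * J e - J (a * e)))
      = derivative a * J e * (b * J c - J (b * c))
        - derivative b * J c * (a * J e - J (a * e)) := by
    apply key
    · simp only [derivative_mul, derivative_sub, derivative_add, dJ]; ring
    · simp [mul_coeff_zero, coeff_sub, cJ]
  have h10 : J (derivative (derivative a * J d) * (b * J c - J (b * c))
        - derivative (derivative b * J c) * (a * J d - J (a * d)))
      = derivative a * J d * (b * J c - J (b * c))
        - derivative b * J c * (a * J d - J (a * d)) := by
    apply key
    · simp only [derivative_mul, derivative_sub, derivative_add, dJ]; ring
    · simp [mul_coeff_zero, coeff_sub, cJ]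
  rw [h5, h6, h7, h8, h9, h10]
  -- the seven inner arguments of the remaining outer `J`'s
  set u2 := derivative (derivative a * (d * J e - e * J d)) * J c with hu2
  set u3 := derivative d * (c * (a * J e - J (a * e)) - derivative a * J e * J c) with hu3
  set u4 := derivative (derivative a * J e) * (c * J d - d * J c) with hu4
  set u5 := derivative (derivative d * (a * J e - J (a * e))
      - derivative (derivative a * J e) * J d) * J c with hu5
  set u6 := derivative (derivative a * J d) * (c * J e - e * J c) with hu6
  set u7 := derivative e * (c * (a * J d - J (a * d)) - derivative a * J d * J c) with hu7
  set u8 := derivative (derivative e * (a * J d - J (a * d))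
      - derivative (derivative a * J d) * J e) * J c with hu8
  have hS : J (u3 + u4 + u5 - u2 - u6 - u7 - u8)
      = (a * (derivative d * J e - derivative e * J d) - derivative d * J (a * e)
          + derivative e * J (a * d) + derivative a * (e * J d - d * J e)) * J c := by
    apply key
    · simp only [hu2, hu3, hu4, hu5, hu6, hu7, hu8, derivative_mul, derivative_sub,
        derivative_add, dJ]
      ring
    · simp [mul_coeff_zero, coeff_sub, coeff_add, cJ]
  have hsum : J u3 + J u4 + J u5 - J u2 - J u6 - J u7 - J u8
      = (a * (derivative d * J e - derivative e * J d) - derivative d * J (a * e)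
          + derivative e * J (a * d) + derivative a * (e * J d - d * J e)) * J c := by
    rw [← map_add, ← map_add, ← map_sub, ← map_sub, ← map_sub, ← map_sub]; exact hS
  simp only [derivative_mul, derivative_sub, derivative_add, dJ] at hsum ⊢
  linear_combination derivative b * hsum
end
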